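/- For fixed probability vectors y (a vertex of the simplex, i.e. one coordinate 1 and the rest 0) and π with strictly positive entries, the density power divergence summand d_λ(y, π) = Σ_j (π_j − (λ+1)/λ · y_j) π_j^λ satisfies lim_{λ→0⁺} (d_λ(y,π) + 1/λ) = −Σ_j y_j log π_j. -/
import Mathlib


open scoped BigOperators

/-- `lim_{λ→0⁺} (d_λ(y,π) + 1/λ) = −Σ_j y_j log π_j` where
`d_λ(y,π) = Σ_j (π_j − ((λ+1)/λ) y_j) π_j^λ`, `y` a vertex of the simplex and
`π` a strictly positive probability vector. -/
theorem dpd_tendsto_kl (n : ℕ) (hn : 1 ≤ n) (y π : Fin n → ℝ) (r : Fin n)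
    (hyr : y r = 1) (hy0 : ∀ j, j ≠ r → y j = 0)
    (hπ : ∀ j, 0 < π j) (hsum : ∑ j, π j = 1) :
    Filter.Tendsto
      (fun l : ℝ => (∑ j, (π j - ((l + 1) / l) * y j) * (π j) ^ l) + 1 / l)
      (nhdsWithin 0 (Set.Ioi 0))
      (nhds (-∑ j, y j * Real.log (π j))) := by
  have htarget : ∑ j, y j * Real.log (π j) = Real.log (π r) := by
    rw [Finset.sum_eq_single r (fun j _ hj => by rw [hy0 j hj, zero_mul])
      (fun h => absurd (Finset.mem_univ r) h), hyr, one_mul]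
  -- rewrite the function on Ioi 0
  have key : ∀ l ∈ Set.Ioi (0:ℝ),
      (∑ j, (π j - ((l + 1) / l) * y j) * (π j) ^ l) + 1 / l
      = (∑ j, π j ^ (l+1)) - π r ^ l - (π r ^ l - 1) / l := by
    intro l hl
    have hl0 : l ≠ 0 := ne_of_gt hl
    have hsplit : ∀ j ∈ Finset.univ, (π j - ((l + 1) / l) * y j) * (π j) ^ l
        = π j ^ (l+1) - ((l+1)/l) * (y j * π j ^ l) := by
      intro j _
      rw [Real.rpow_add (hπ j), Real.rpow_one]; ring
    rw [Finset.sum_congr rfl hsplit, Finset.sum_sub_distrib, ← Finset.mul_sum]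
    have hyr' : ∑ j, y j * π j ^ l = π r ^ l := by
      rw [Finset.sum_eq_single r (fun j _ hj => by rw [hy0 j hj, zero_mul])
        (fun h => absurd (Finset.mem_univ r) h), hyr, one_mul]
    rw [hyr']
    field_simp
    ring
  have h1 : Filter.Tendsto (fun l : ℝ => ∑ j, π j ^ (l+1))
      (nhdsWithin 0 (Set.Ioi 0)) (nhds 1) := by
    have h : Filter.Tendsto (fun l : ℝ => ∑ j, π j ^ (l+1))
        (nhdsWithin 0 (Set.Ioi 0)) (nhds (∑ j : Fin n, π j ^ ((0:ℝ)+1))) :=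
      tendsto_finset_sum _ (fun j _ =>
        (((Real.continuousAt_const_rpow (ne_of_gt (hπ j))).comp
          (continuousAt_id.add continuousAt_const)).continuousWithinAt).tendsto)
    simpa [hsum] using h
  have h2 : Filter.Tendsto (fun l : ℝ => π r ^ l)
      (nhdsWithin 0 (Set.Ioi 0)) (nhds 1) := by
    have : ContinuousAt (fun l : ℝ => π r ^ l) 0 :=
      Real.continuousAt_const_rpow (ne_of_gt (hπ r))
    have h := (this.continuousWithinAt (s := Set.Ioi 0)).tendsto
    simpa using h
  have h3 : Filter.Tendsto (fun l : ℝ => (π r ^ l - 1) / l)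
      (nhdsWithin 0 (Set.Ioi 0)) (nhds (Real.log (π r))) := by
    have hd : HasDerivAt (fun l : ℝ => π r ^ l) (Real.log (π r)) 0 := by
      have := (hasDerivAt_const (0:ℝ) (π r)).rpow (hasDerivAt_id 0) (hπ r)
      simpa using this
    have := hd.hasDerivWithinAt (s := Set.Ioi 0)
    rw [hasDerivWithinAt_iff_tendsto_slope] at this
    have hsub : Set.Ioi (0:ℝ) \ {0} = Set.Ioi 0 :=
      Set.diff_singleton_eq_self (by simp)
    rw [hsub] at this
    refine this.congr (fun x => ?_)
    simp [slope_def_field, div_eq_inv_mul]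
  have hcomb : Filter.Tendsto
      (fun l : ℝ => (∑ j, π j ^ (l+1)) - π r ^ l - (π r ^ l - 1) / l)
      (nhdsWithin 0 (Set.Ioi 0)) (nhds (1 - 1 - Real.log (π r))) :=
    (h1.sub h2).sub h3
  rw [htarget]
  have : (1:ℝ) - 1 - Real.log (π r) = -Real.log (π r) := by ring
  rw [this] at hcomb
  exact hcomb.congr' (Filter.eventuallyEq_of_mem self_mem_nhdsWithin
    (fun l hl => (key l hl).symm))
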